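/- Let α = [0;2,\overline{r}] with r ≥ 1 and let k, m ∈ ℕ be such that 0 ≤ k ≤ q_{m+1} − 2. If v denotes the prefix of c_α of length k, then the k-th right conjugate of σ^m satisfies (σ^m)_k(c_α) = v⁻¹c_α; that is, applying (σ^m)_k to c_α deletes its first k letters. -/

import Mathlib

/-- The two-letter alphabet 𝒜 = {a, b}. -/
inductive AB : Type
  | a : AB
  | b : AB
deriving DecidableEq, Repr

/-- Apply a morphism (determined by its images on the letters) to a finite word. -/
def applyM (g : AB → List AB) (w : List AB) : List AB := w.flatMap g

/-- The exchange morphism E : a ↦ b, b ↦ a. -/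
def Em : AB → List AB
  | AB.a => [AB.b]
  | AB.b => [AB.a]

/-- The morphism φ : a ↦ ab, b ↦ a. -/
def phim : AB → List AB
  | AB.a => [AB.a, AB.b]
  | AB.b => [AB.a]

/-- Composition of morphisms: `compM g h` applies `h` first, then `g`. -/
def compM (g h : AB → List AB) : AB → List AB := fun c => applyM g (h c)

/-- Powers of a morphism. -/
def mpow (g : AB → List AB) : ℕ → AB → List AB
  | 0 => fun c => [c]
  | n + 1 => compM g (mpow g n)

/-- A morphism is standard iff it is a composition of E and φ (in any number and order). -/
inductive IsStandard : (AB → List AB) → Prop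
  | id : IsStandard (fun c => [c])
  | compE {ψ : AB → List AB} : IsStandard ψ → IsStandard (compM ψ Em)
  | compPhi {ψ : AB → List AB} : IsStandard ψ → IsStandard (compM ψ phim)

/-- `IsRightConj ψ ξ k` : ξ is the k-th right conjugate of ψ, i.e. there is a word u
of length k with ψ(w)u = uξ(w) for all finite words w. -/
def IsRightConj (ψ ξ : AB → List AB) (k : ℕ) : Prop :=
  ∃ u : List AB, u.length = k ∧ ∀ w : List AB, applyM ψ w ++ u = u ++ applyM ξ w

/-- w^k (power of a finite word under concatenation). -/
def lpow (w : List AB) : ℕ → List AB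
  | 0 => []
  | k + 1 => w ++ lpow w k

/-- Standard sequence associated with a directive sequence (d₁, d₂, …) (here `d`
is indexed so that `d i` is dᵢ for i ≥ 1): `sseq d 0 = s₋₁ = b`, `sseq d (n+1) = sₙ`,
with s₀ = a and sₙ = sₙ₋₁^{dₙ} sₙ₋₂. -/
def sseq (d : ℕ → ℕ) : ℕ → List AB
  | 0 => [AB.b]
  | 1 => [AB.a]
  | n + 2 => lpow (sseq d (n + 1)) (d (n + 1)) ++ sseq d n

/-- Convergent denominators: `qseq d n` = qₙ = |sₙ| (q₀ = 1, q₁ = 1 + d₁,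
qₙ = dₙqₙ₋₁ + qₙ₋₂). -/
def qseq (d : ℕ → ℕ) : ℕ → ℕ
  | 0 => 1
  | 1 => 1 + d 1
  | n + 2 => d (n + 2) * qseq d (n + 1) + qseq d n

/-- `PrefInf u x` : the finite word u is a prefix of the infinite word x. -/
def PrefInf (u : List AB) (x : ℕ → AB) : Prop :=
  ∀ i, i < u.length → u.getD i AB.a = x i

/-- Image of an infinite word under a (non-erasing) morphism, letter by letter. -/
def applyInf (g : AB → List AB) (x : ℕ → AB) : ℕ → AB :=
  fun i => (applyM g ((List.range (i + 1)).map x)).getD i AB.a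

/-- `IsProdInf u x` : the infinite word x is the infinite product u 0 · u 1 · u 2 ⋯,
i.e. every finite partial product is a prefix of x. -/
def IsProdInf (u : ℕ → List AB) (x : ℕ → AB) : Prop :=
  ∀ n, PrefInf (((List.range n).map u).flatten) x

/-- Adjoining singular words: `vword d k` is the adjoining singular word v_{k-1}
(so `vword d 0 = v₋₁`), where vₙ = a·sₙ₊₁^{d_{n+2}−1}sₙ·b⁻¹ for n odd and
vₙ = b·sₙ₊₁^{d_{n+2}−1}sₙ·a⁻¹ for n even. -/
def vword (d : ℕ → ℕ) (k : ℕ) : List AB :=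
  (if k % 2 = 0 then AB.a else AB.b) ::
    (lpow (sseq d (k + 1)) (d (k + 1) - 1) ++ sseq d k).dropLast

/-- Singular words: `wword d k` is the singular word w_{k-2}
(w₋₂ = ε, w₋₁ = a, w₀ = b, and wₙ = a·sₙ·b⁻¹ for n ≥ 1 odd, wₙ = b·sₙ·a⁻¹ for n even). -/
def wword (d : ℕ → ℕ) : ℕ → List AB
  | 0 => []
  | 1 => [AB.a]
  | 2 => [AB.b]
  | k + 3 =>
      (if (k + 1) % 2 = 1 then AB.a else AB.b) :: (sseq d (k + 2)).dropLast

/-- The standard morphism σ associated with a type (i) Sturm number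
α = [0;1+d₁,\overline{d₂,…,dₙ}] : σ(a) = sₙ₋₁, σ(b) = sₙ₋₁^{dₙ−d₁} sₙ₋₂. -/
def sigmaGen (d : ℕ → ℕ) (n : ℕ) : AB → List AB
  | AB.a => sseq d n
  | AB.b => lpow (sseq d n) (d n - d 1) ++ sseq d (n - 1)

/-- The directive sequence of α = [0;2,\overline{r}] : d₁ = 1, dᵢ = r for i ≥ 2. -/
def dseq (r : ℕ) : ℕ → ℕ := fun i => if i ≤ 1 then 1 else r

/-- The directive sequence of 1 − α = [0;1,d₁,\overline{d₂,…,dₙ}] obtained from that of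
α = [0;1+d₁,\overline{d₂,…,dₙ}] : ê₁ = 0 and êᵢ = dᵢ₋₁ for i ≥ 2. -/
def dhat (d : ℕ → ℕ) : ℕ → ℕ := fun i => if i ≤ 1 then 0 else d (i - 1)

/-- `Generates ψ c x` : ψ is prolongable on the letter c and x = ψ^ω(c), i.e. every
ψ^m(c) is a prefix of x. -/
def Generates (ψ : AB → List AB) (c : AB) (x : ℕ → AB) : Prop :=
  (∃ w : List AB, w ≠ [] ∧ ψ c = c :: w) ∧ ∀ m, PrefInf (mpow ψ m c) x

/-- Fibonacci numbers, shifted: `fibw k = F_{k-1}`, so fibw 0 = F₋₁ = 1,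
fibw 1 = F₀ = 1, Fₙ = Fₙ₋₁ + Fₙ₋₂. -/
def fibw : ℕ → ℕ
  | 0 => 1
  | 1 => 1
  | n + 2 => fibw (n + 1) + fibw n

/-- `HasCF γ a` : γ has continued fraction expansion [0; a 1, a 2, a 3, …]. -/
def HasCF (γ : ℝ) (a : ℕ → ℕ) : Prop :=
  ∃ x : ℕ → ℝ, x 0 = γ ∧ (∀ i, 0 < x i ∧ x i < 1) ∧
    ∀ i, 1 / x i = (a (i + 1) : ℝ) + x (i + 1)

/-- γ has a continued fraction expansion of type (i):
γ = [0;1+d₁,\overline{d₂,…,dₙ}] < 1/2 with dₙ ≥ d₁ ≥ 1. -/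
def CFTypeI (γ : ℝ) : Prop :=
  ∃ a : ℕ → ℕ, HasCF γ a ∧ γ < 1 / 2 ∧
    ∃ n : ℕ, 2 ≤ n ∧ ∃ d : ℕ → ℕ,
      (∀ i, 1 ≤ i → 1 ≤ d i) ∧ a 1 = 1 + d 1 ∧ (∀ i, 2 ≤ i → a i = d i) ∧
      (∀ i, 2 ≤ i → d (i + (n - 1)) = d i) ∧ d 1 ≤ d n

/-- γ has a continued fraction expansion of type (ii):
γ = [0;1,d₁,\overline{d₂,…,dₙ}] > 1/2 with dₙ ≥ d₁. -/
def CFTypeII (γ : ℝ) : Prop :=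
  ∃ a : ℕ → ℕ, HasCF γ a ∧ 1 / 2 < γ ∧
    ∃ n : ℕ, 2 ≤ n ∧ ∃ d : ℕ → ℕ,
      (∀ i, 1 ≤ i → 1 ≤ d i) ∧ a 1 = 1 ∧ (∀ i, 2 ≤ i → a i = d (i - 1)) ∧
      (∀ i, 2 ≤ i → d (i + (n - 1)) = d i) ∧ d 1 ≤ d n

/-- A Sturm number: an irrational γ ∈ (0,1) whose continued fraction expansion is of
type (i) or type (ii). -/
def IsSturmNumber (γ : ℝ) : Prop :=
  Irrational γ ∧ 0 < γ ∧ γ < 1 ∧ (CFTypeI γ ∨ CFTypeII γ)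

/-
If `ψ(w) u = u ξ(w)` with `|u| = k`, then comparing letter `k + i` of both sides for a long
prefix `w` of `c` gives `ξ(c)ᵢ = ψ(c)_{k+i}`. Since `σ(sₙ) = sₙ₊₁`, the morphism `σ^m` fixes
`c_α`, so `ξ(c_α)ᵢ = (c_α)_{k+i}`.
-/

section Morphisms

variable (g : AB → List AB)

lemma applyM_append (w₁ w₂ : List AB) :
    applyM g (w₁ ++ w₂) = applyM g w₁ ++ applyM g w₂ :=
  List.flatMap_append ..

lemma applyM_singleton (z : AB) : applyM g [z] = g z := by
  simp [applyM]

lemma applyM_compM (h : AB → List AB) (w : List AB) :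
    applyM (compM g h) w = applyM g (applyM h w) :=
  List.flatMap_assoc.symm

lemma applyM_lpow (w : List AB) (n : ℕ) : applyM g (lpow w n) = lpow (applyM g w) n := by
  induction n with
  | zero => rfl
  | succ n ih => simp only [lpow, applyM_append, ih]

lemma length_lpow (w : List AB) (n : ℕ) : (lpow w n).length = n * w.length := by
  induction n with
  | zero => simp [lpow]
  | succ n ih => simp [lpow, ih, Nat.succ_mul, Nat.add_comm]

variable {g}

lemma length_le_length_applyM (hg : ∀ z, g z ≠ []) (w : List AB) :
    w.length ≤ (applyM g w).length := by
  induction w with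
  | nil => simp [applyM]
  | cons z t ih =>
    have hz : 1 ≤ (g z).length := List.length_pos_iff.mpr (hg z)
    simp only [applyM, List.flatMap_cons, List.length_append, List.length_cons] at ih ⊢
    omega

lemma mpow_ne_nil (hg : ∀ z, g z ≠ []) (m : ℕ) (z : AB) : mpow g m z ≠ [] := by
  induction m with
  | zero => simp [mpow]
  | succ m ih =>
    exact List.length_pos_iff.mp <|
      (List.length_pos_iff.mpr ih).trans_le (length_le_length_applyM hg (mpow g m z))

end Morphisms

lemma IsRightConj.length_applyM {ψ ξ : AB → List AB} {k : ℕ} (hξ : IsRightConj ψ ξ k)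
    (w : List AB) : (applyM ξ w).length = (applyM ψ w).length := by
  obtain ⟨u, -, hu⟩ := hξ
  have := congrArg List.length (hu w)
  simp only [List.length_append] at this
  omega

lemma PrefInf.map_range_eq_take {w : List AB} {x : ℕ → AB} (hw : PrefInf w x) {n : ℕ}
    (hn : n ≤ w.length) : (List.range n).map x = w.take n := by
  refine List.ext_getElem (by simp [hn]) fun j hj _ => ?_
  simp only [List.length_map, List.length_range] at hj
  have := hw j (by omega)
  rw [List.getD_eq_getElem _ _ (by omega)] at this
  simp [this]

lemma applyInf_eq_getD_of_prefInf {g : AB → List AB} (hg : ∀ z, g z ≠ []) {w : List AB}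
    {x : ℕ → AB} (hw : PrefInf w x) {i : ℕ} (hi : i < w.length) :
    applyInf g x i = (applyM g w).getD i AB.a := by
  have htake : (i + 1) ≤ (applyM g (w.take (i + 1))).length := by
    have := length_le_length_applyM hg (w.take (i + 1))
    rw [List.length_take] at this
    omega
  rw [applyInf, hw.map_range_eq_take (by omega), ← List.take_append_drop (i + 1) w,
    applyM_append, List.getD_append _ _ _ _ (by omega), List.take_append_drop]

theorem applyInf_eq_shift_of_isRightConj {ψ ξ : AB → List AB} {k : ℕ}
    (hψ : ∀ z, ψ z ≠ []) (hξ : IsRightConj ψ ξ k) {x : ℕ → AB}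
    (hfix : ∀ n, ∃ w, n ≤ w.length ∧ PrefInf w x ∧ PrefInf (applyM ψ w) x) :
    applyInf ξ x = fun i => x (i + k) := by
  have hξne : ∀ z, ξ z ≠ [] := fun z h => hψ z <| List.eq_nil_of_length_eq_zero <| by
    simpa only [applyM_singleton, h, List.length_nil] using (hξ.length_applyM [z]).symm
  obtain ⟨u, hu, hconj⟩ := hξ
  funext i
  obtain ⟨w, hlen, hw, hψw⟩ := hfix (k + i + 1)
  have hψlen := (length_le_length_applyM hψ w).trans' hlen
  calc applyInf ξ x i = (applyM ξ w).getD i AB.a :=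
        applyInf_eq_getD_of_prefInf hξne hw (by omega)
    _ = (u ++ applyM ξ w).getD (k + i) AB.a := by
        rw [List.getD_append_right _ _ _ _ (by omega), hu, Nat.add_sub_cancel_left]
    _ = (applyM ψ w).getD (k + i) AB.a := by
        rw [← hconj, List.getD_append _ _ _ _ (by omega)]
    _ = x (i + k) := by rw [hψw (k + i) (by omega), Nat.add_comm]

lemma sseq_ne_nil (d : ℕ → ℕ) : ∀ n, sseq d n ≠ []
  | 0 | 1 => by simp [sseq]
  | n + 2 => fun h => sseq_ne_nil d n (List.append_eq_nil_iff.mp h).2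

lemma dseq_of_two_le (r : ℕ) {n : ℕ} (hn : 2 ≤ n) : dseq r n = r :=
  if_neg (by omega)

lemma sigmaGen_ne_nil (r : ℕ) (z : AB) : sigmaGen (dseq r) 2 z ≠ [] := by
  cases z with
  | a => exact sseq_ne_nil _ 2
  | b => exact fun h => sseq_ne_nil (dseq r) 1 (List.append_eq_nil_iff.mp h).2

lemma applyM_sigmaGen_sseq (r : ℕ) (hr : 1 ≤ r) :
    ∀ n, applyM (sigmaGen (dseq r) 2) (sseq (dseq r) (n + 1)) = sseq (dseq r) (n + 2)
  | 0 => applyM_singleton _ _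
  | 1 => by
    obtain ⟨r, rfl⟩ : ∃ r', r = r' + 1 := ⟨r - 1, by omega⟩
    change applyM _ ([AB.a] ++ [AB.b]) = lpow (sseq _ 2) (dseq _ 2) ++ sseq _ 1
    rw [applyM_append, applyM_singleton, applyM_singleton, dseq_of_two_le _ le_rfl]
    rfl
  | n + 2 => by
    change applyM _ (lpow (sseq _ (n + 2)) (dseq r (n + 2)) ++ sseq _ (n + 1)) =
      lpow (sseq _ (n + 3)) (dseq r (n + 3)) ++ sseq _ (n + 2)
    rw [applyM_append, applyM_lpow, applyM_sigmaGen_sseq r hr (n + 1),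
      applyM_sigmaGen_sseq r hr n, dseq_of_two_le r (by omega : 2 ≤ n + 2),
      dseq_of_two_le r (by omega : 2 ≤ n + 3)]

lemma applyM_mpow_sigmaGen_sseq (r : ℕ) (hr : 1 ≤ r) (m n : ℕ) :
    applyM (mpow (sigmaGen (dseq r) 2) m) (sseq (dseq r) (n + 1)) =
      sseq (dseq r) (n + m + 1) := by
  induction m with
  | zero => simp [mpow, applyM]
  | succ m ih =>
    rw [mpow, applyM_compM, ih, applyM_sigmaGen_sseq r hr, ← Nat.add_assoc]

lemma le_length_sseq (r : ℕ) (hr : 1 ≤ r) : ∀ n, n ≤ (sseq (dseq r) (n + 1)).length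
  | 0 => Nat.zero_le _
  | 1 => by simp [sseq, lpow, dseq]
  | n + 2 => by
    have ih := le_length_sseq r hr (n + 1)
    have hpos := List.length_pos_iff.mpr (sseq_ne_nil (dseq r) (n + 1))
    change n + 2 ≤ (lpow (sseq _ (n + 2)) (dseq r (n + 2)) ++ sseq _ (n + 1)).length
    rw [List.length_append, length_lpow, dseq_of_two_le r (by omega)]
    nlinarith

theorem statement3_general (r : ℕ) (hr : 1 ≤ r)
    (c : ℕ → AB) (hc : ∀ n, PrefInf (sseq (dseq r) (n + 1)) c)
    (k m : ℕ)
    (ξ : AB → List AB) (hξ : IsRightConj (mpow (sigmaGen (dseq r) 2) m) ξ k) :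
    applyInf ξ c = fun i => c (i + k) := by
  refine applyInf_eq_shift_of_isRightConj (mpow_ne_nil (sigmaGen_ne_nil r) m) hξ fun n =>
    ⟨sseq (dseq r) (n + 1), le_length_sseq r hr n, hc n, ?_⟩
  rw [applyM_mpow_sigmaGen_sseq r hr]
  exact hc (n + m)

/-- For α = [0;2,\overline{r}] (r ≥ 1) and 0 ≤ k ≤ q_{m+1} − 2, the k-th
right conjugate of σ^m applied to c_α deletes the first k letters of c_α, i.e.
(σ^m)_k(c_α) = v⁻¹c_α where v is the prefix of c_α of length k. -/
theorem statement3 (r : ℕ) (hr : 1 ≤ r)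
    (c : ℕ → AB) (hc : ∀ n, PrefInf (sseq (dseq r) (n + 1)) c)
    (k m : ℕ) (hk : k ≤ qseq (dseq r) (m + 1) - 2)
    (ξ : AB → List AB) (hξ : IsRightConj (mpow (sigmaGen (dseq r) 2) m) ξ k) :
    applyInf ξ c = fun i => c (i + k) :=
  statement3_general r hr c hc k m ξ hξ
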